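/- The samples of the PBL signal are uniquely identifiable up to an integer constant vector from the modulo samples if and only if there does not exist a polynomial f with integer coefficients of degree at most N−1, with f not of the form A·(X^{N−1} + X^{N−2} + ⋯ + X + 1) for any A ∈ ℤ, such that f(exp(2πi·n/N)) = 0 for all n with P+1 ≤ n ≤ N−P−1. -/

import Mathlib

/-!
With `ζ = e^{2πi/N}`, a real vector `z` is a PBL sample vector iff `∑ₙ zₙ ζ^{qn}` vanishes at the
gap frequencies `q = P + 1, …, N - P - 1`: one direction is the orthogonality of the characters
`n ↦ ζ^{(p + q) n}` for `0 < p + q < N`, the other is DFT inversion over the window of frequencies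
`P + 1 - N, …, P`. As PBL sample vectors form a real vector space, identifiability means that every
integer vector with this spectral gap is constant. An integer vector `k` is the coefficient vector
of `f = ∑ kₙ Xⁿ`, of degree `< N`, with `∑ₙ kₙ ζ^{qn} = f(ζ^q)`, and the constant vectors are
the coefficient vectors of the multiples of `1 + X + ⋯ + X^{N-1}`.
-/

open Polynomial

/-- `y : Fin N → ℝ` is a length-`N` sample vector of a periodic bandlimited signal with
`P` harmonics: `y n = ∑_{p=-P}^{P} c p · exp(2πi·n·p/N)` with `c (-p) = conj (c p)`. -/
def IsPBLSample (P N : ℕ) (y : Fin N → ℝ) : Prop :=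
  ∃ c : ℤ → ℂ, (∀ p : ℤ, c (-p) = (starRingEnd ℂ) (c p)) ∧
    ∀ n : Fin N, (y n : ℂ) =
      ∑ p ∈ Finset.Icc (-(P : ℤ)) (P : ℤ),
        c p * Complex.exp (2 * Real.pi * Complex.I * (n : ℕ) * p / N)

/-- The samples of the PBL signal are uniquely identifiable up to an integer constant
vector from the modulo samples. -/
def PBLIdentifiable (P N : ℕ) : Prop :=
  ∀ y y' : Fin N → ℝ, IsPBLSample P N y → IsPBLSample P N y' →
    (∀ n : Fin N, ∃ k : ℤ, y n - y' n = k) →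
    ∃ c : ℤ, ∀ n : Fin N, y n - y' n = c

open Finset

def dftAt {K : Type*} [Field K] {N : ℕ} (ζ : K) (z : Fin N → K) (q : ℤ) : K :=
  ∑ m : Fin N, z m * ζ ^ (q * m)

lemma dftAt_sub {K : Type*} [Field K] {N : ℕ} (ζ : K) (z w : Fin N → K) (q : ℤ) :
    dftAt ζ (z - w) q = dftAt ζ z q - dftAt ζ w q := by
  simp only [dftAt, Pi.sub_apply, sub_mul, sum_sub_distrib]

namespace IsPrimitiveRoot

variable {K : Type*} [Field K] {N : ℕ} {ζ : K}

lemma sum_range_zpow_mul_eq_zero (hζ : IsPrimitiveRoot ζ N) {j : ℤ} (hj : ¬(N : ℤ) ∣ j) :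
    ∑ n ∈ range N, ζ ^ (j * n) = 0 := by
  have hne : ζ ^ j ≠ 1 := fun h ↦ hj ((hζ.zpow_eq_one_iff_dvd j).1 h)
  have hpow : (ζ ^ j) ^ N = 1 := by
    rw [← zpow_natCast, ← zpow_mul, hζ.zpow_eq_one_iff_dvd]
    exact dvd_mul_left _ _
  simp_rw [zpow_mul, zpow_natCast]
  rw [geom_sum_eq hne, hpow, sub_self, zero_div]

lemma sum_Ico_zpow_mul_eq_zero (hζ : IsPrimitiveRoot ζ N) (a : ℤ) {j : ℤ} (hj : ¬(N : ℤ) ∣ j) :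
    ∑ p ∈ Ico a (a + N), ζ ^ (p * j) = 0 := by
  obtain rfl | hN := eq_or_ne N 0
  · simp
  have hζ0 : ζ ≠ 0 := hζ.ne_zero hN
  rw [Int.Ico_eq_finset_map, sum_map, add_sub_cancel_left, Int.toNat_natCast]
  simp only [Function.Embedding.trans_apply, Nat.castEmbedding_apply, addLeftEmbedding_apply,
    add_mul, zpow_add₀ hζ0, ← mul_sum]
  simp_rw [mul_comm _ j]
  rw [hζ.sum_range_zpow_mul_eq_zero hj, mul_zero]

lemma sum_Ico_zpow_mul_sub (hζ : IsPrimitiveRoot ζ N) (a : ℤ) (n m : Fin N) :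
    ∑ p ∈ Ico a (a + N), ζ ^ (p * (n - m : ℤ)) = if m = n then (N : K) else 0 := by
  split_ifs with hmn
  · simp [hmn]
  · refine hζ.sum_Ico_zpow_mul_eq_zero a fun hdvd ↦ hmn (Fin.ext ?_)
    have := Int.eq_zero_of_abs_lt_dvd hdvd (abs_lt.2 ⟨by omega, by omega⟩)
    omega

lemma sum_Ico_dftAt_neg_mul_zpow (hζ : IsPrimitiveRoot ζ N) (a : ℤ) (z : Fin N → K)
    (n : Fin N) : ∑ p ∈ Ico a (a + N), dftAt ζ z (-p) * ζ ^ (p * n) = N * z n := by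
  have hζ0 : ζ ≠ 0 := hζ.ne_zero (Fin.pos n).ne'
  calc ∑ p ∈ Ico a (a + N), dftAt ζ z (-p) * ζ ^ (p * n)
      = ∑ m : Fin N, z m * ∑ p ∈ Ico a (a + N), ζ ^ (p * (n - m : ℤ)) := by
        simp only [dftAt, sum_mul, mul_sum]
        rw [sum_comm]
        refine sum_congr rfl fun m _ ↦ sum_congr rfl fun p _ ↦ ?_
        rw [mul_assoc, ← zpow_add₀ hζ0]
        ring_nf
    _ = N * z n := by
        simp_rw [hζ.sum_Ico_zpow_mul_sub a n]
        simp [mul_comm]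

end IsPrimitiveRoot

noncomputable def unitRoot (N : ℕ) : ℂ := Complex.exp (2 * Real.pi * Complex.I / N)

lemma unitRoot_ne_zero (N : ℕ) : unitRoot N ≠ 0 := Complex.exp_ne_zero _

lemma isPrimitiveRoot_unitRoot {N : ℕ} (hN : N ≠ 0) : IsPrimitiveRoot (unitRoot N) N :=
  Complex.isPrimitiveRoot_exp N hN

lemma exp_eq_unitRoot_zpow (N : ℕ) (k : ℤ) :
    Complex.exp (2 * Real.pi * Complex.I * k / N) = unitRoot N ^ k := by
  rw [unitRoot, ← Complex.exp_int_mul]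
  ring_nf

lemma exp_mul_mul_div_eq_unitRoot_zpow (N n : ℕ) (p : ℤ) :
    Complex.exp (2 * Real.pi * Complex.I * n * p / N) = unitRoot N ^ (p * n) := by
  rw [← exp_eq_unitRoot_zpow]
  push_cast
  ring_nf

lemma conj_unitRoot_zpow (N : ℕ) (k : ℤ) :
    (starRingEnd ℂ) (unitRoot N ^ k) = unitRoot N ^ (-k) := by
  rw [← exp_eq_unitRoot_zpow, ← exp_eq_unitRoot_zpow, ← Complex.exp_conj]
  simp only [map_div₀, map_mul, Complex.conj_I, Complex.conj_ofReal, map_ofNat,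
    map_intCast, map_natCast]
  push_cast
  ring_nf

lemma conj_dftAt_ofReal {N : ℕ} (z : Fin N → ℝ) (q : ℤ) :
    (starRingEnd ℂ) (dftAt (unitRoot N) (fun n ↦ (z n : ℂ)) q) =
      dftAt (unitRoot N) (fun n ↦ (z n : ℂ)) (-q) := by
  simp only [dftAt, map_sum, map_mul, Complex.conj_ofReal, conj_unitRoot_zpow, neg_mul]

def IsBandlimited (P N : ℕ) (z : Fin N → ℂ) : Prop :=
  ∀ q : ℕ, P + 1 ≤ q → q ≤ N - P - 1 → dftAt (unitRoot N) z q = 0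

lemma IsPBLSample.isBandlimited {P N : ℕ} (hN : 2 * P + 1 < N) {y : Fin N → ℝ}
    (hy : IsPBLSample P N y) : IsBandlimited P N (fun n ↦ (y n : ℂ)) := by
  obtain ⟨c, -, hc⟩ := hy
  have hζ := isPrimitiveRoot_unitRoot (show N ≠ 0 by omega)
  intro q hq₁ hq₂
  calc dftAt (unitRoot N) (fun n ↦ (y n : ℂ)) q
      = ∑ p ∈ Icc (-(P : ℤ)) P, c p * ∑ n : Fin N, unitRoot N ^ ((p + q) * n) := by
        simp only [dftAt, hc, exp_mul_mul_div_eq_unitRoot_zpow, sum_mul, mul_sum]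
        rw [sum_comm]
        refine sum_congr rfl fun p _ ↦ sum_congr rfl fun n _ ↦ ?_
        rw [mul_assoc, ← zpow_add₀ (unitRoot_ne_zero N), add_mul]
    _ = 0 := sum_eq_zero fun p hp ↦ by
        rw [mem_Icc] at hp
        rw [Fin.sum_univ_eq_sum_range (fun n ↦ unitRoot N ^ ((p + q) * n)),
          hζ.sum_range_zpow_mul_eq_zero, mul_zero]
        intro h
        have := Int.eq_zero_of_dvd_of_nonneg_of_lt (by omega) (by omega) h
        omega

lemma isPBLSample_of_isBandlimited {P N : ℕ} (hN : 2 * P + 1 < N) {z : Fin N → ℝ}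
    (hz : IsBandlimited P N (fun n ↦ (z n : ℂ))) : IsPBLSample P N z := by
  set Z := dftAt (unitRoot N) (fun n ↦ (z n : ℂ))
  have hζ := isPrimitiveRoot_unitRoot (show N ≠ 0 by omega)
  have hN₀ : (N : ℂ) ≠ 0 := by exact_mod_cast (show N ≠ 0 by omega)
  refine ⟨fun p ↦ (N : ℂ)⁻¹ * Z (-p), fun p ↦ ?_, fun n ↦ ?_⟩
  · simp only [Z, map_mul, map_inv₀, map_natCast, conj_dftAt_ofReal, neg_neg]
  -- Invert the DFT over the window `[P + 1 - N, P]` of frequencies; its part below `-P`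
  -- consists of negated gap frequencies, where `Z` vanishes.
  have hgap : ∀ p ∈ Ico (P + 1 - N : ℤ) (-P), Z (-p) * unitRoot N ^ (p * n) = 0 := by
    intro p hp
    rw [mem_Ico] at hp
    have := hz (-p).toNat (by omega) (by omega)
    rw [Int.toNat_of_nonneg (by omega)] at this
    rw [show Z (-p) = 0 from this, zero_mul]
  have hinv := hζ.sum_Ico_dftAt_neg_mul_zpow (P + 1 - N) (fun n ↦ (z n : ℂ)) n
  rw [sub_add_cancel, ← Ico_union_Ico_eq_Ico (b := -(P : ℤ)) (by omega) (by omega),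
    sum_union (Ico_disjoint_Ico_consecutive _ _ _), sum_eq_zero hgap, zero_add,
    Ico_add_one_right_eq_Icc] at hinv
  rw [(eq_inv_mul_iff_mul_eq₀ hN₀).2 hinv.symm, mul_sum]
  refine sum_congr rfl fun p _ ↦ ?_
  rw [exp_mul_mul_div_eq_unitRoot_zpow, mul_assoc]

lemma isPBLSample_iff_isBandlimited {P N : ℕ} (hN : 2 * P + 1 < N) (z : Fin N → ℝ) :
    IsPBLSample P N z ↔ IsBandlimited P N (fun n ↦ (z n : ℂ)) :=
  ⟨IsPBLSample.isBandlimited hN, isPBLSample_of_isBandlimited hN⟩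

lemma IsBandlimited.sub {P N : ℕ} {z w : Fin N → ℂ} (hz : IsBandlimited P N z)
    (hw : IsBandlimited P N w) : IsBandlimited P N (z - w) := by
  intro q hq₁ hq₂
  rw [dftAt_sub, hz q hq₁ hq₂, hw q hq₁ hq₂, sub_zero]

lemma pblIdentifiable_iff {P N : ℕ} (hN : 2 * P + 1 < N) :
    PBLIdentifiable P N ↔
      ∀ k : Fin N → ℤ, IsBandlimited P N (fun n ↦ (k n : ℂ)) → ∃ c : ℤ, ∀ n, k n = c := by
  constructor
  · intro hid k hk
    have hy : IsPBLSample P N (fun n ↦ (k n : ℝ)) :=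
      isPBLSample_of_isBandlimited hN (by simpa only [Complex.ofReal_intCast] using hk)
    have h₀ : IsPBLSample P N 0 := ⟨0, by simp, by simp⟩
    obtain ⟨c, hc⟩ := hid _ _ hy h₀ fun n ↦ ⟨k n, sub_zero _⟩
    exact ⟨c, fun n ↦ by exact_mod_cast sub_zero (k n : ℝ) ▸ hc n⟩
  · intro h y y' hy hy' hk
    choose k hk using hk
    obtain ⟨c, hc⟩ := h k <| by
      convert (hy.isBandlimited hN).sub (hy'.isBandlimited hN) using 1
      ext n
      simp only [Pi.sub_apply, ← Complex.ofReal_sub, hk n, Complex.ofReal_intCast]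
    exact ⟨c, fun n ↦ by rw [hk n, hc n]⟩

lemma aeval_exp_eq_dftAt {N : ℕ} {f : ℤ[X]} (hf : f.natDegree < N) (q : ℕ) :
    aeval (Complex.exp (2 * Real.pi * Complex.I * q / N)) f =
      dftAt (unitRoot N) (fun n : Fin N ↦ (f.coeff n : ℂ)) q := by
  rw [aeval_eq_sum_range' hf, ← Fin.sum_univ_eq_sum_range, dftAt, ← Int.cast_natCast q,
    exp_eq_unitRoot_zpow]
  refine sum_congr rfl fun n _ ↦ ?_
  rw [zsmul_eq_mul, ← zpow_natCast, ← zpow_mul]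

lemma coeff_C_mul_geom_sum {R : Type*} [Semiring R] (N : ℕ) (A : R) (m : ℕ) :
    (C A * ∑ i ∈ range N, X ^ i).coeff m = if m < N then A else 0 := by
  simp [coeff_C_mul, coeff_X_pow]

lemma eq_C_mul_geom_sum_iff {R : Type*} [Semiring R] {N : ℕ} {f : R[X]} (hf : f.natDegree < N)
    (A : R) : f = C A * ∑ i ∈ range N, X ^ i ↔ ∀ n : Fin N, f.coeff n = A := by
  constructor
  · rintro rfl n
    rw [coeff_C_mul_geom_sum, if_pos n.isLt]
  · intro h
    ext m
    rw [coeff_C_mul_geom_sum]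
    split_ifs with hm
    · exact h ⟨m, hm⟩
    · exact coeff_eq_zero_of_natDegree_lt (by omega)

lemma natDegree_lt_of_mem_degreeLT {R : Type*} [Semiring R] {N : ℕ} (hN : N ≠ 0) {f : R[X]}
    (hf : f ∈ degreeLT R N) : f.natDegree < N := by
  obtain rfl | hf₀ := eq_or_ne f 0
  · simpa using Nat.pos_of_ne_zero hN
  · exact (natDegree_lt_iff_degree_lt hf₀).2 (mem_degreeLT.1 hf)

theorem stmt18_general (P N : ℕ) (hN : 2 * P + 1 < N) :
    PBLIdentifiable P N ↔
      ¬∃ f : Polynomial ℤ, f.natDegree ≤ N - 1 ∧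
        (¬∃ A : ℤ, f = C A * ∑ i ∈ Finset.range N, X ^ i) ∧
        (∀ n : ℕ, P + 1 ≤ n → n ≤ N - P - 1 →
          Polynomial.aeval (Complex.exp (2 * Real.pi * Complex.I * n / N)) f = 0) := by
  rw [pblIdentifiable_iff hN]
  constructor
  · rintro h ⟨f, hdeg, hf, hvan⟩
    replace hdeg : f.natDegree < N := by omega
    obtain ⟨A, hA⟩ := h (fun n ↦ f.coeff n) fun q hq₁ hq₂ ↦ by
      rw [← aeval_exp_eq_dftAt hdeg]
      exact hvan q hq₁ hq₂
    exact hf ⟨A, (eq_C_mul_geom_sum_iff hdeg A).2 hA⟩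
  · intro h k hk
    set f : ℤ[X] := ((degreeLTEquiv ℤ N).symm k : ℤ[X])
    have hcoeff : ∀ n : Fin N, f.coeff n = k n :=
      congr_fun ((degreeLTEquiv ℤ N).apply_symm_apply k)
    have hdeg : f.natDegree < N :=
      natDegree_lt_of_mem_degreeLT (by omega) ((degreeLTEquiv ℤ N).symm k).2
    by_contra hconst
    refine h ⟨f, by omega, fun ⟨A, hA⟩ ↦ hconst ⟨A, ?_⟩, fun q hq₁ hq₂ ↦ ?_⟩
    · simpa only [hcoeff] using (eq_C_mul_geom_sum_iff hdeg A).1 hA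
    · simp only [aeval_exp_eq_dftAt hdeg, hcoeff]
      exact hk q hq₁ hq₂

/-- the PBL samples are identifiable up to an integer constant vector iff
there is no integer polynomial f of degree at most N−1, not of the form
A·(X^{N−1} + ⋯ + X + 1), vanishing at e^{2πin/N} for all n with P+1 ≤ n ≤ N−P−1. -/
theorem stmt18 (P N : ℕ) (hP : 1 ≤ P) (hN : 2 * P + 1 < N) :
    PBLIdentifiable P N ↔
      ¬∃ f : Polynomial ℤ, f.natDegree ≤ N - 1 ∧
        (¬∃ A : ℤ, f = C A * ∑ i ∈ Finset.range N, X ^ i) ∧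
        (∀ n : ℕ, P + 1 ≤ n → n ≤ N - P - 1 →
          Polynomial.aeval (Complex.exp (2 * Real.pi * Complex.I * n / N)) f = 0) :=
  stmt18_general P N hN
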